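/- For every integer m ≥ 2 the ratio of consecutive SFTR-1/2 weights satisfies ω_m/ω_{m−1} ≤ 1 − 2α/m < 1 (in particular ω_{m−1} ≠ 0). -/

import Mathlib

/-!
Writing the recurrence as `(m + 2)(α + 1) ω_{m+2} = 2(m + 1 - α²) ω_{m+1} - (1 - α) m ω_m`, one shows by
induction that from `ω_1 < 0` on the weights stay negative with
`(1 - 2α/(m+2)) ω_{m+1} ≤ ω_{m+2} ≤ (1 - α) ω_{m+1}`. The upper bound keeps the sign, and the lower bound
gives `ω_{m+1} ≤ ω_{m+2}`, which is exactly what the next lower bound needs: its slack is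
`(1 - α) m (ω_{m+1} - ω_m)`.
-/

/-- The SFTR-1/2 weights `ω_m`. -/
noncomputable def sftrW (α : ℝ) : ℕ → ℝ
  | 0 => (2 * α / (α + 1)) ^ α
  | 1 => -α * (2 * α / (α + 1)) ^ (α + 1)
  | (m + 2) =>
      2 * α / (((m : ℝ) + 2) * (α + 1)) *
        (((((m : ℝ) + 2) - 1) / α - α) * sftrW α (m + 1) +
          (α - 1) / (2 * α) * (((m : ℝ) + 2) - 2) * sftrW α m)

lemma sftrW_add_two {α : ℝ} (hα : α ≠ 0) (n : ℕ) :
    sftrW α (n + 2) = (2 * ((n : ℝ) + 1 - α ^ 2) * sftrW α (n + 1) + (α - 1) * n * sftrW α n) /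
      ((n + 2) * (α + 1)) := by
  rw [sftrW]
  field_simp
  ring

lemma sftrW_one_neg {α : ℝ} (hα : 0 < α) : sftrW α 1 < 0 := by
  have : 0 < (2 * α / (α + 1)) ^ (α + 1) := by positivity
  rw [sftrW]
  nlinarith

lemma sftrW_two {α : ℝ} (hα : 0 < α) : sftrW α 2 = (1 - α) * sftrW α 1 := by
  rw [sftrW_add_two hα.ne' 0]
  have : α + 1 ≠ 0 := by positivity
  field_simp
  push_cast
  ring

-- With `x = ω_n` and `y = ω_{n+1}` the middle term is `ω_{n+2}`, by `sftrW_add_two`.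
lemma sftr_step_bounds {α n x y : ℝ} (hα0 : 0 < α) (hα1 : α ≤ 1) (hn : 0 ≤ n)
    (hxy : x ≤ y) (hyx : y ≤ (1 - α) * x) :
    (1 - 2 * α / (n + 2)) * y ≤ (2 * (n + 1 - α ^ 2) * y + (α - 1) * n * x) / ((n + 2) * (α + 1)) ∧
      (2 * (n + 1 - α ^ 2) * y + (α - 1) * n * x) / ((n + 2) * (α + 1)) ≤ (1 - α) * y := by
  have hx : x ≤ 0 := by nlinarith
  have hy : y ≤ 0 := by nlinarith
  have hden : 0 < (n + 2) * (α + 1) := by positivity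
  constructor
  · -- the slack is `(1 - α) n (y - x)`
    rw [le_div_iff₀ hden]
    have : (1 - 2 * α / (n + 2)) * y * ((n + 2) * (α + 1)) = (n + 2 - 2 * α) * (α + 1) * y := by
      field_simp
    nlinarith [mul_nonneg (mul_nonneg (sub_nonneg.2 hα1) hn) (sub_nonneg.2 hxy)]
  · -- the slack is `n ((1 - α) x - y) - α² n y`
    rw [div_le_iff₀ hden]
    nlinarith [mul_le_mul_of_nonneg_left hyx hn, mul_nonneg (mul_nonneg (sq_nonneg α) hn) (neg_nonneg.2 hy)]

lemma sftrW_bounds {α : ℝ} (hα0 : 0 < α) (hα1 : α < 1) (n : ℕ) :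
    sftrW α (n + 1) < 0 ∧
      (1 - 2 * α / ((n : ℝ) + 2)) * sftrW α (n + 1) ≤ sftrW α (n + 2) ∧
      sftrW α (n + 2) ≤ (1 - α) * sftrW α (n + 1) := by
  induction n with
  | zero =>
    have hcoef : 1 - 2 * α / ((0 : ℕ) + 2 : ℝ) = 1 - α := by norm_num
    rw [sftrW_two hα0, hcoef]
    exact ⟨sftrW_one_neg hα0, le_rfl, le_rfl⟩
  | succ n ih =>
    obtain ⟨hneg, hlow, hupp⟩ := ih
    have hmono : sftrW α (n + 1) ≤ sftrW α (n + 2) := by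
      have : 0 ≤ 2 * α / ((n : ℝ) + 2) := by positivity
      nlinarith
    rw [sftrW_add_two hα0.ne' (n + 1)]
    push_cast
    refine ⟨by nlinarith, ?_⟩
    convert sftr_step_bounds hα0 hα1.le (by positivity : (0 : ℝ) ≤ n + 1) hmono hupp using 3

theorem sftrW_ratio_le (α : ℝ) (hα : α ∈ Set.Ioo (0 : ℝ) 1) :
    ∀ m : ℕ, 2 ≤ m →
      sftrW α (m - 1) ≠ 0 ∧
      sftrW α m / sftrW α (m - 1) ≤ 1 - 2 * α / (m : ℝ) ∧
      1 - 2 * α / (m : ℝ) < 1 := by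
  intro m hm
  obtain ⟨n, rfl⟩ := Nat.exists_eq_add_of_le' hm
  obtain ⟨hneg, hlow, -⟩ := sftrW_bounds hα.1 hα.2 n
  rw [show n + 2 - 1 = n + 1 from rfl]
  have hcoef : 0 < 2 * α / ((n + 2 : ℕ) : ℝ) := div_pos (by linarith [hα.1]) (by positivity)
  refine ⟨hneg.ne, ?_, by linarith⟩
  rw [div_le_iff_of_neg hneg]
  push_cast
  exact hlow
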